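/- arXiv:2510.22501 — 2 statements merged into one kernel-verified Lean document; each statement's English description precedes it below -/
import Mathlib

section
/- For every q ∈ (0,1]ⁿ and every t ≥ 0, the SDIR trajectories satisfy the entrywise inequality x(t) + Q·y(t) ≤ M(q)ᵗ·(x(0) + Q·y(0)), where Q = diag(q) and M(q) = I − C(q) + (A + Q(I − A))·S0·B. (Iterated comparison bound from the proof of Theorem 1.) -/
open Matrix Filter Finset

/-- Spectral radius of a real square matrix: the maximum modulus of its complex
eigenvalues (elements of the spectrum of the matrix viewed over `ℂ`). -/
noncomputable def specRad {n : ℕ} (M : Matrix (Fin n) (Fin n) ℝ) : ℝ :=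
  sSup {r : ℝ | ∃ μ : ℂ, μ ∈ spectrum ℂ (M.map (Complex.ofReal)) ∧ r = ‖μ‖}

/-! With `z = x + Q y`, one SDIR step gives `z(t+1) ≤ M(q) z(t)`: the difference is
`(D - C) x + (Q D' + (Q - I) W - Q C) y + K B Q y` with `K = (A + Q (I - A)) S0 ≥ 0`, and both
diagonal coefficients are nonnegative by the choice of `C(q)`. Since `M(q)` is entrywise
nonnegative, multiplication by it is monotone, so the one-step bound iterates. -/

namespace Matrix

variable {ι R : Type*} [Fintype ι]

lemma mulVec_mono_of_nonneg [Semiring R] [PartialOrder R] [IsOrderedRing R] {M : Matrix ι ι R}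
    (hM : ∀ i j, 0 ≤ M i j) {u v : ι → R} (h : u ≤ v) : M *ᵥ u ≤ M *ᵥ v := fun i =>
  Finset.sum_le_sum fun j _ => mul_le_mul_of_nonneg_left (h j) (hM i j)

lemma le_pow_mulVec_of_le_mulVec [DecidableEq ι] [Semiring R] [PartialOrder R] [IsOrderedRing R]
    {M : Matrix ι ι R} (hM : ∀ i j, 0 ≤ M i j) {z : ℕ → ι → R}
    (hz : ∀ t, z (t + 1) ≤ M *ᵥ z t) (t : ℕ) : z t ≤ M ^ t *ᵥ z 0 := by
  induction t with
  | zero => simp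
  | succ t ih =>
    calc z (t + 1) ≤ M *ᵥ z t := hz t
      _ ≤ M *ᵥ (M ^ t *ᵥ z 0) := mulVec_mono_of_nonneg hM ih
      _ = M ^ (t + 1) *ᵥ z 0 := by rw [mulVec_mulVec, ← pow_succ']

end Matrix

section Comparison

variable {ι : Type*} [Fintype ι] [DecidableEq ι]

/-- The paper's `M(q)`, with `C(q)` replaced by an arbitrary diagonal `c`. -/
def comparisonMatrix (c α q s : ι → ℝ) (B : Matrix ι ι ℝ) : Matrix ι ι ℝ :=
  1 - diagonal c + (diagonal α + diagonal q * (1 - diagonal α)) * diagonal s * B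

variable {c α q s : ι → ℝ} {B : Matrix ι ι ℝ}

lemma comparisonMatrix_eq :
    comparisonMatrix c α q s B = diagonal (1 - c) + diagonal ((α + q * (1 - α)) * s) * B := by
  rw [comparisonMatrix, ← diagonal_one', diagonal_sub, diagonal_sub, diagonal_mul_diagonal,
    diagonal_add, diagonal_mul_diagonal]
  rfl

lemma comparisonMatrix_nonneg (hc : ∀ i, c i ≤ 1) (hα : ∀ i, 0 ≤ α i ∧ α i ≤ 1)
    (hq : ∀ i, 0 ≤ q i) (hs : ∀ i, 0 ≤ s i) (hB : ∀ i j, 0 ≤ B i j) :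
    ∀ i j, 0 ≤ comparisonMatrix c α q s B i j := by
  intro i j
  have hk : 0 ≤ (α i + q i * (1 - α i)) * s i :=
    mul_nonneg (by nlinarith [hα i, hq i]) (hs i)
  rw [comparisonMatrix_eq, Matrix.add_apply, diagonal_mul, diagonal_apply]
  refine add_nonneg ?_ (mul_nonneg hk (hB i j))
  split_ifs
  · exact sub_nonneg.2 (hc i)
  · exact le_rfl

lemma comparisonMatrix_mulVec (v : ι → ℝ) :
    comparisonMatrix c α q s B *ᵥ v = (1 - c) * v + (α + q * (1 - α)) * s * (B *ᵥ v) := by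
  ext i
  simp only [comparisonMatrix_eq, add_mulVec, ← mulVec_mulVec, Pi.add_apply, mulVec_diagonal,
    Pi.mul_apply]

lemma sdir_step_le_comparisonMatrix_mulVec {δ δ' ω : ι → ℝ} (hcδ : ∀ i, c i ≤ δ i)
    (hcδ' : ∀ i, q i * c i ≤ q i * δ' i + (q i - 1) * ω i) (hα : ∀ i, 0 ≤ α i ∧ α i ≤ 1)
    (hq : ∀ i, 0 ≤ q i) (hs : ∀ i, 0 ≤ s i) (hB : ∀ i j, 0 ≤ B i j) {x y : ι → ℝ}
    (hx : 0 ≤ x) (hy : 0 ≤ y) :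
    (1 - diagonal δ + diagonal α * diagonal s * B) *ᵥ x + diagonal ω *ᵥ y +
        diagonal q *ᵥ (((1 - diagonal α) * diagonal s * B) *ᵥ x +
          (1 - diagonal ω - diagonal δ') *ᵥ y) ≤
      comparisonMatrix c α q s B *ᵥ (x + diagonal q *ᵥ y) := by
  intro i
  have hBqy : 0 ≤ (B *ᵥ (diagonal q *ᵥ y)) i := Finset.sum_nonneg fun j _ =>
    mul_nonneg (hB i j) ((mulVec_diagonal q y j).symm ▸ mul_nonneg (hq j) (hy j))
  have hδx : 0 ≤ (δ i - c i) * x i := mul_nonneg (sub_nonneg.2 (hcδ i)) (hx i)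
  have hδ'y : 0 ≤ (q i * δ' i + (q i - 1) * ω i - q i * c i) * y i :=
    mul_nonneg (sub_nonneg.2 (hcδ' i)) (hy i)
  have hk : 0 ≤ (α i + q i * (1 - α i)) * s i * (B *ᵥ (diagonal q *ᵥ y)) i :=
    mul_nonneg (mul_nonneg (by nlinarith [hα i, hq i]) (hs i)) hBqy
  simp only [comparisonMatrix_mulVec, mulVec_add, add_mulVec, sub_mulVec, one_mulVec,
    ← mulVec_mulVec, mulVec_diagonal, Pi.add_apply, Pi.sub_apply, Pi.mul_apply, Pi.one_apply]
  linear_combination hδx + hδ'y + hk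

end Comparison

theorem sdir_iterated_comparison_general
    (n : ℕ) (α ω δ δ' s : Fin n → ℝ)
    (hα : ∀ i, 0 ≤ α i ∧ α i ≤ 1)
    (hδ : ∀ i, 0 ≤ δ i ∧ δ i ≤ 1)
    (hs : ∀ i, 0 ≤ s i ∧ s i ≤ 1)
    (B : Matrix (Fin n) (Fin n) ℝ) (hB : ∀ i j, 0 ≤ B i j)
    (x y : ℕ → Fin n → ℝ)
    (hx : ∀ t i, 0 ≤ x t i) (hy : ∀ t i, 0 ≤ y t i)
    (hdynx : ∀ t, x (t + 1) =
      (1 - Matrix.diagonal δ + Matrix.diagonal α * Matrix.diagonal s * B) *ᵥ x t +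
        Matrix.diagonal ω *ᵥ y t)
    (hdyny : ∀ t, y (t + 1) =
      ((1 - Matrix.diagonal α) * Matrix.diagonal s * B) *ᵥ x t +
        (1 - Matrix.diagonal ω - Matrix.diagonal δ') *ᵥ y t)
    (q : Fin n → ℝ) (hq : ∀ i, 0 < q i ∧ q i ≤ 1) (t : ℕ) :
    x t + Matrix.diagonal q *ᵥ y t ≤
      (1 - Matrix.diagonal (fun i => min (δ i) (δ' i + (1 - 1 / q i) * ω i)) +
        (Matrix.diagonal α + Matrix.diagonal q * (1 - Matrix.diagonal α)) *
          Matrix.diagonal s * B) ^ t *ᵥ (x 0 + Matrix.diagonal q *ᵥ y 0) := by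
  set c : Fin n → ℝ := fun i => min (δ i) (δ' i + (1 - 1 / q i) * ω i)
  have hcδ : ∀ i, c i ≤ δ i := fun i => min_le_left _ _
  have hcδ' : ∀ i, q i * c i ≤ q i * δ' i + (q i - 1) * ω i := fun i => by
    have hqi : q i ≠ 0 := (hq i).1.ne'
    calc q i * c i ≤ q i * (δ' i + (1 - 1 / q i) * ω i) :=
          mul_le_mul_of_nonneg_left (min_le_right _ _) (hq i).1.le
      _ = q i * δ' i + (q i - 1) * ω i := by field_simp
  have hq₀ : ∀ i, 0 ≤ q i := fun i => (hq i).1.le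
  have hs₀ : ∀ i, 0 ≤ s i := fun i => (hs i).1
  have hM := comparisonMatrix_nonneg (fun i => (hcδ i).trans (hδ i).2) hα hq₀ hs₀ hB
  refine le_pow_mulVec_of_le_mulVec hM (z := fun t => x t + diagonal q *ᵥ y t) (fun t => ?_) t
  rw [hdynx, hdyny]
  exact sdir_step_le_comparisonMatrix_mulVec hcδ hcδ' hα hq₀ hs₀ hB (hx t) (hy t)

/-- Iterated comparison bound from the proof of Theorem 1:
`x(t) + Q·y(t) ≤ M(q)ᵗ·(x(0) + Q·y(0))` entrywise. -/
theorem sdir_iterated_comparison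
    (n : ℕ) (hn : 1 ≤ n) (α ω δ δ' s : Fin n → ℝ)
    (hα : ∀ i, 0 ≤ α i ∧ α i ≤ 1) (hω : ∀ i, 0 ≤ ω i ∧ ω i ≤ 1)
    (hδ : ∀ i, 0 ≤ δ i ∧ δ i ≤ 1) (hδ' : ∀ i, 0 ≤ δ' i ∧ δ' i ≤ 1)
    (hs : ∀ i, 0 ≤ s i ∧ s i ≤ 1) (hωδ' : ∀ i, ω i + δ' i ≤ 1)
    (B : Matrix (Fin n) (Fin n) ℝ) (hB : ∀ i j, 0 ≤ B i j)
    (x y : ℕ → Fin n → ℝ)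
    (hx : ∀ t i, 0 ≤ x t i) (hy : ∀ t i, 0 ≤ y t i)
    (hdynx : ∀ t, x (t + 1) =
      (1 - Matrix.diagonal δ + Matrix.diagonal α * Matrix.diagonal s * B) *ᵥ x t +
        Matrix.diagonal ω *ᵥ y t)
    (hdyny : ∀ t, y (t + 1) =
      ((1 - Matrix.diagonal α) * Matrix.diagonal s * B) *ᵥ x t +
        (1 - Matrix.diagonal ω - Matrix.diagonal δ') *ᵥ y t)
    (q : Fin n → ℝ) (hq : ∀ i, 0 < q i ∧ q i ≤ 1) (t : ℕ) :
    x t + Matrix.diagonal q *ᵥ y t ≤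
      (1 - Matrix.diagonal (fun i => min (δ i) (δ' i + (1 - 1 / q i) * ω i)) +
        (Matrix.diagonal α + Matrix.diagonal q * (1 - Matrix.diagonal α)) *
          Matrix.diagonal s * B) ^ t *ᵥ (x 0 + Matrix.diagonal q *ᵥ y 0) :=
  sdir_iterated_comparison_general n α ω δ δ' s hα hδ hs B hB x y hx hy hdynx hdyny q hq t
end

section
/- Fix q ∈ (0,1]ⁿ satisfying δ_i ≤ δ'_i + (1 − 1/q_i)·ω_i for every i, fix nonnegative initial vectors x(0), y(0) ∈ ℝⁿ, and let Q ⊆ {1,…,n}×{1,…,n} be a candidate edge set such that ρ(M_{−P}(q)) < 1 for every P ⊆ Q. Then the set function P ↦ σ^U(P) = 1ᵀ·(A + Q(I − A))^{−1}·(D·(I − M_{−P}(q))^{−1} − I)·(x(0) + Q·y(0)) is non-increasing: for all P ⊆ P' ⊆ Q one has σ^U(P') ≤ σ^U(P). (First part of Lemma 1.) -/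
open Matrix Filter Finset

/-- The matrix `B` with the entries indexed by the edge set `P` deleted (set to `0`). -/
def Bdel {n : ℕ} (B : Matrix (Fin n) (Fin n) ℝ) (P : Finset (Fin n × Fin n)) :
    Matrix (Fin n) (Fin n) ℝ :=
  Matrix.of fun i j => if (i, j) ∈ P then 0 else B i j

/-- The upper-bound set function
`σᵁ(P) = 1ᵀ·(A + Q(I − A))⁻¹·(D·(I − M₋ₚ(q))⁻¹ − I)·(x0 + Q·y0)`. -/
noncomputable def sigmaU {n : ℕ} (α ω δ δ' s q x0 y0 : Fin n → ℝ)
    (B : Matrix (Fin n) (Fin n) ℝ) (P : Finset (Fin n × Fin n)) : ℝ :=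
  (fun _ => (1 : ℝ)) ⬝ᵥ
    ((Matrix.diagonal α + Matrix.diagonal q * (1 - Matrix.diagonal α))⁻¹ *
      (Matrix.diagonal δ *
        (1 - (1 - Matrix.diagonal (fun i => min (δ i) (δ' i + (1 - 1 / q i) * ω i)) +
          (Matrix.diagonal α + Matrix.diagonal q * (1 - Matrix.diagonal α)) *
            Matrix.diagonal s * Bdel B P))⁻¹ - 1)) *ᵥ
      (x0 + Matrix.diagonal q *ᵥ y0)

/-!
Since `ρ(M) < 1`, Gelfand's formula makes the Neumann series `∑ Mᵏ` converge to `(I − M)⁻¹`.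
Deleting more edges makes the nonnegative matrix `M₋ₚ(q)` entrywise smaller, hence every power
`Mᵏ` and therefore `(I − M₋ₚ(q))⁻¹` entrywise smaller; all the remaining factors in `σᵁ` are
entrywise nonnegative (the hypothesis on `q` makes `C(q) = D`, so `I − C(q) ≥ 0`).
-/

open scoped NNReal

theorem spectrum.eventually_norm_pow_le_of_spectralRadius_lt {A : Type*} [NormedRing A]
    [NormedAlgebra ℂ A] [CompleteSpace A] {a : A} {r : ℝ≥0} (h : spectralRadius ℂ a < r) :
    ∀ᶠ k : ℕ in atTop, ‖a ^ k‖ ≤ r ^ k := by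
  filter_upwards [(pow_nnnorm_pow_one_div_tendsto_nhds_spectralRadius a).eventually_lt_const h,
    eventually_ge_atTop 1] with k hk hk1
  have hk0 : (0 : ℝ) < k := by exact_mod_cast hk1
  rw [one_div, ENNReal.rpow_inv_lt_iff hk0, ENNReal.rpow_natCast] at hk
  exact_mod_cast hk.le

namespace Matrix

theorem diagonal_apply_nonneg {ι R : Type*} [DecidableEq ι] [Zero R] [Preorder R] {d : ι → R}
    (hd : ∀ i, 0 ≤ d i) (i j : ι) : 0 ≤ diagonal d i j := by
  rw [diagonal_apply]
  split_ifs
  exacts [hd i, le_rfl]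

section Order

variable {ι R : Type*} [Fintype ι] [Semiring R] [PartialOrder R] [IsOrderedRing R]

theorem mul_apply_le_mul_apply_of_nonneg_left {L X Y : Matrix ι ι R} (hL : ∀ i j, 0 ≤ L i j)
    (h : ∀ i j, X i j ≤ Y i j) (i j : ι) : (L * X) i j ≤ (L * Y) i j :=
  Finset.sum_le_sum fun k _ => mul_le_mul_of_nonneg_left (h k j) (hL i k)

theorem pow_apply_le_pow_apply [DecidableEq ι] {M N : Matrix ι ι R} (hM : ∀ i j, 0 ≤ M i j)
    (h : ∀ i j, M i j ≤ N i j) (k : ℕ) (i j : ι) : (M ^ k) i j ≤ (N ^ k) i j := by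
  induction k generalizing j with
  | zero => rfl
  | succ k ih =>
    rw [pow_succ, pow_succ, mul_apply, mul_apply]
    exact Finset.sum_le_sum fun l _ =>
      mul_le_mul (ih l) (h l j) (hM l j) ((pow_apply_nonneg hM k i l).trans (ih l))

theorem dotProduct_mulVec_le_of_apply_le {X Y : Matrix ι ι R} {u v : ι → R} (hu : 0 ≤ u)
    (hv : 0 ≤ v) (h : ∀ i j, X i j ≤ Y i j) : u ⬝ᵥ X *ᵥ v ≤ u ⬝ᵥ Y *ᵥ v :=
  dotProduct_le_dotProduct_of_nonneg_left
    (fun i => dotProduct_le_dotProduct_of_nonneg_right (h i) hv) hu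

end Order

section OrderedRing

variable {ι R : Type*} [Fintype ι] [DecidableEq ι] [Ring R] [PartialOrder R] [IsOrderedRing R]

theorem one_sub_diagonal_add_diagonal_mul_apply_nonneg {d g : ι → R} {N : Matrix ι ι R}
    (hd : ∀ i, d i ≤ 1) (hg : ∀ i, 0 ≤ g i) (hN : ∀ i j, 0 ≤ N i j) (i j : ι) :
    0 ≤ (1 - diagonal d + diagonal g * N) i j := by
  have hgN := mul_nonneg (hg i) (hN i j)
  rw [add_apply, sub_apply, diagonal_mul, one_apply, diagonal_apply]
  split_ifs
  · exact add_nonneg (sub_nonneg.2 (hd i)) hgN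
  · simpa using hgN

theorem one_sub_diagonal_add_diagonal_mul_apply_le {d g : ι → R} {N N' : Matrix ι ι R}
    (hg : ∀ i, 0 ≤ g i) (h : ∀ i j, N' i j ≤ N i j) (i j : ι) :
    (1 - diagonal d + diagonal g * N') i j ≤ (1 - diagonal d + diagonal g * N) i j := by
  simp only [add_apply, diagonal_mul]
  gcongr
  exacts [hg i, h i j]

end OrderedRing

theorem inv_diagonal_apply_nonneg {ι K : Type*} [Fintype ι] [DecidableEq ι] [Field K]
    [LinearOrder K] [IsStrictOrderedRing K] {e : ι → K} (he : ∀ i, 0 < e i) (i j : ι) :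
    0 ≤ (diagonal e)⁻¹ i j := by
  have hinv : (diagonal e)⁻¹ = diagonal fun i => (e i)⁻¹ :=
    inv_eq_left_inv (by simp [diagonal_mul_diagonal, fun i => (he i).ne'])
  exact hinv ▸ diagonal_apply_nonneg (fun i => inv_nonneg.mpr (he i).le) i j

end Matrix

theorem Bdel_apply_nonneg {n : ℕ} {B : Matrix (Fin n) (Fin n) ℝ} (hB : ∀ i j, 0 ≤ B i j)
    (P : Finset (Fin n × Fin n)) (i j : Fin n) : 0 ≤ Bdel B P i j := by
  simp only [Bdel, of_apply]
  split_ifs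
  exacts [le_rfl, hB i j]

theorem Bdel_apply_le_of_subset {n : ℕ} {B : Matrix (Fin n) (Fin n) ℝ} (hB : ∀ i j, 0 ≤ B i j)
    {P P' : Finset (Fin n × Fin n)} (h : P ⊆ P') (i j : Fin n) : Bdel B P' i j ≤ Bdel B P i j := by
  by_cases hP' : (i, j) ∈ P'
  · simpa [Bdel, hP'] using Bdel_apply_nonneg hB P i j
  · have hP : (i, j) ∉ P := fun hP => hP' (h hP)
    simp [Bdel, hP', hP]

section NeumannSeries

attribute [local instance] Matrix.linftyOpNormedRing Matrix.linftyOpNormedAlgebra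

variable {n : ℕ}

theorem Matrix.linfty_opNorm_map_ofReal (M : Matrix (Fin n) (Fin n) ℝ) :
    ‖M.map Complex.ofReal‖ = ‖M‖ := by
  simp [Matrix.linfty_opNorm_def]

theorem spectralRadius_map_ofReal_le_specRad (M : Matrix (Fin n) (Fin n) ℝ) :
    spectralRadius ℂ (M.map Complex.ofReal) ≤ ENNReal.ofReal (specRad M) := by
  obtain ⟨C, hC⟩ :=
    isBounded_iff_forall_norm_le.mp (spectrum.isBounded (𝕜 := ℂ) (M.map Complex.ofReal))
  refine iSup₂_le fun μ hμ => ?_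
  rw [← enorm_eq_nnnorm, ← ofReal_norm]
  exact ENNReal.ofReal_le_ofReal
    (le_csSup ⟨C, by rintro _ ⟨ν, hν, rfl⟩; exact hC ν hν⟩ ⟨μ, hμ, rfl⟩)

theorem summable_pow_of_specRad_lt_one {M : Matrix (Fin n) (Fin n) ℝ} (h : specRad M < 1) :
    Summable (M ^ ·) := by
  obtain ⟨r, hMr, hr1⟩ := ENNReal.lt_iff_exists_nnreal_btwn.mp
    ((spectralRadius_map_ofReal_le_specRad M).trans_lt (ENNReal.ofReal_lt_one.mpr h))
  refine Summable.of_norm_bounded_eventually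
    (summable_geometric_of_lt_one r.2 (by exact_mod_cast hr1)) ?_
  rw [Nat.cofinite_eq_atTop]
  filter_upwards [spectrum.eventually_norm_pow_le_of_spectralRadius_lt hMr] with k hk
  rw [← Matrix.linfty_opNorm_map_ofReal]
  exact (Matrix.map_pow M Complex.ofRealHom k).symm ▸ hk

theorem inv_one_sub_eq_tsum_pow {M : Matrix (Fin n) (Fin n) ℝ} (h : specRad M < 1) :
    (1 - M)⁻¹ = ∑' k : ℕ, M ^ k :=
  Matrix.inv_eq_right_inv (summable_pow_of_specRad_lt_one h).one_sub_mul_tsum_pow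

theorem inv_one_sub_apply_le_of_apply_le {M N : Matrix (Fin n) (Fin n) ℝ}
    (hM0 : ∀ i j, 0 ≤ M i j) (h : ∀ i j, M i j ≤ N i j) (hM : specRad M < 1)
    (hN : specRad N < 1) (i j : Fin n) : (1 - M)⁻¹ i j ≤ (1 - N)⁻¹ i j := by
  have entry {X : Matrix (Fin n) (Fin n) ℝ} (hX : specRad X < 1) :
      HasSum (fun k => (X ^ k) i j) ((1 - X)⁻¹ i j) := by
    rw [inv_one_sub_eq_tsum_pow hX]
    exact Pi.hasSum.mp (Pi.hasSum.mp (summable_pow_of_specRad_lt_one hX).hasSum i) j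
  exact hasSum_le (Matrix.pow_apply_le_pow_apply hM0 h · i j) (entry hM) (entry hN)

end NeumannSeries

theorem sigmaU_nonincreasing_general
    (n : ℕ) (α ω δ δ' s : Fin n → ℝ)
    (hα : ∀ i, 0 ≤ α i ∧ α i ≤ 1)
    (hδ : ∀ i, 0 ≤ δ i ∧ δ i ≤ 1)
    (hs : ∀ i, 0 ≤ s i ∧ s i ≤ 1)
    (B : Matrix (Fin n) (Fin n) ℝ) (hB : ∀ i j, 0 ≤ B i j)
    (q : Fin n → ℝ) (hq : ∀ i, 0 < q i ∧ q i ≤ 1)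
    (hqδ : ∀ i, δ i ≤ δ' i + (1 - 1 / q i) * ω i)
    (x0 y0 : Fin n → ℝ) (hx0 : ∀ i, 0 ≤ x0 i) (hy0 : ∀ i, 0 ≤ y0 i)
    (Qc : Finset (Fin n × Fin n))
    (hρ : ∀ P ⊆ Qc, specRad
      (1 - Matrix.diagonal (fun i => min (δ i) (δ' i + (1 - 1 / q i) * ω i)) +
        (Matrix.diagonal α + Matrix.diagonal q * (1 - Matrix.diagonal α)) *
          Matrix.diagonal s * Bdel B P) < 1) :
    ∀ P P' : Finset (Fin n × Fin n), P ⊆ P' → P' ⊆ Qc →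
      sigmaU α ω δ δ' s q x0 y0 B P' ≤ sigmaU α ω δ δ' s q x0 y0 B P := by
  intro P P' hPP' hP'Qc
  set e : Fin n → ℝ := fun i => α i + q i * (1 - α i)
  have he : ∀ i, 0 < e i := fun i => by nlinarith [hα i, hq i]
  have hC : (fun i => min (δ i) (δ' i + (1 - 1 / q i) * ω i)) = δ :=
    funext fun i => min_eq_left (hqδ i)
  have hAQ : Matrix.diagonal α + Matrix.diagonal q * (1 - Matrix.diagonal α) = diagonal e := by
    rw [← diagonal_one, diagonal_sub, diagonal_mul_diagonal, diagonal_add]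
  have hAQS : diagonal e * diagonal s = diagonal fun i => e i * s i := diagonal_mul_diagonal _ _
  rw [hC, hAQ, hAQS] at hρ
  have hM0 := one_sub_diagonal_add_diagonal_mul_apply_nonneg (fun i => (hδ i).2)
    (fun i => mul_nonneg (he i).le (hs i).1) (Bdel_apply_nonneg hB P')
  have hinv := inv_one_sub_apply_le_of_apply_le hM0
    (one_sub_diagonal_add_diagonal_mul_apply_le (fun i => mul_nonneg (he i).le (hs i).1)
      (Bdel_apply_le_of_subset hB hPP')) (hρ P' hP'Qc) (hρ P (hPP'.trans hP'Qc))
  have hv : 0 ≤ x0 + diagonal q *ᵥ y0 := fun j => by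
    simpa [mulVec_diagonal] using add_nonneg (hx0 j) (mul_nonneg (hq j).1.le (hy0 j))
  unfold sigmaU
  rw [hC, hAQ, hAQS]
  refine dotProduct_mulVec_le_of_apply_le (fun _ => zero_le_one) hv fun i j => ?_
  refine mul_apply_le_mul_apply_of_nonneg_left (inv_diagonal_apply_nonneg he) (fun i j => ?_) i j
  exact sub_le_sub_right (mul_apply_le_mul_apply_of_nonneg_left
    (diagonal_apply_nonneg fun i => (hδ i).1) hinv i j) _

/-- Lemma 1 (first part): `σᵁ` is non-increasing on subsets of the candidate set. -/
theorem sigmaU_nonincreasing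
    (n : ℕ) (hn : 1 ≤ n) (α ω δ δ' s : Fin n → ℝ)
    (hα : ∀ i, 0 ≤ α i ∧ α i ≤ 1) (hω : ∀ i, 0 ≤ ω i ∧ ω i ≤ 1)
    (hδ : ∀ i, 0 ≤ δ i ∧ δ i ≤ 1) (hδ' : ∀ i, 0 ≤ δ' i ∧ δ' i ≤ 1)
    (hs : ∀ i, 0 ≤ s i ∧ s i ≤ 1) (hωδ' : ∀ i, ω i + δ' i ≤ 1)
    (B : Matrix (Fin n) (Fin n) ℝ) (hB : ∀ i j, 0 ≤ B i j)
    (q : Fin n → ℝ) (hq : ∀ i, 0 < q i ∧ q i ≤ 1)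
    (hqδ : ∀ i, δ i ≤ δ' i + (1 - 1 / q i) * ω i)
    (x0 y0 : Fin n → ℝ) (hx0 : ∀ i, 0 ≤ x0 i) (hy0 : ∀ i, 0 ≤ y0 i)
    (Qc : Finset (Fin n × Fin n))
    (hρ : ∀ P ⊆ Qc, specRad
      (1 - Matrix.diagonal (fun i => min (δ i) (δ' i + (1 - 1 / q i) * ω i)) +
        (Matrix.diagonal α + Matrix.diagonal q * (1 - Matrix.diagonal α)) *
          Matrix.diagonal s * Bdel B P) < 1) :
    ∀ P P' : Finset (Fin n × Fin n), P ⊆ P' → P' ⊆ Qc →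
      sigmaU α ω δ δ' s q x0 y0 B P' ≤ sigmaU α ω δ δ' s q x0 y0 B P :=
  sigmaU_nonincreasing_general n α ω δ δ' s hα hδ hs B hB q hq hqδ x0 y0 hx0 hy0 Qc hρ
end
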